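/- arXiv:2503.01454 — 3 statements merged into one kernel-verified Lean document; each statement's English description precedes it below -/
import Mathlib

section
/- For λ = (λ₁,…,λₙ) in the Gårding cone Γ_k (i.e. σ_i(λ) > 0 for all 1 ≤ i ≤ k), the partial derivative σ_{k-1}(λ|i) = ∂σ_k/∂λ_i is strictly positive for every index 1 ≤ i ≤ n. -/
/-! Write `a = λᵢ` and `σⱼ = σⱼ(λ|i)`, so that `σⱼ₊₁(λ) = σⱼ₊₁ + a σⱼ`. By induction on `j`,
deleting an entry maps `Γⱼ₊₁` into `Γⱼ`: if `σⱼ₋₁ > 0` but `σⱼ ≤ 0`, positivity of `σⱼ(λ)` and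
`σⱼ₊₁(λ)` gives `a σⱼ₋₁ > -σⱼ ≥ 0` and `σⱼ₊₁ > -a σⱼ`, hence `σⱼ₋₁ σⱼ₊₁ > σⱼ²`, against
Newton's inequality. Newton's inequality holds for every real vector: the derivative of
`∏ (X + λₘ)` is again real-rooted by Rolle's theorem and has the same normalized coefficients
`σⱼ / C(m, j)`, which reduces it to vectors of length `j + 1`, where it follows by induction on
the length. -/

/-- The k-th elementary symmetric polynomial of `x : Fin n → ℝ`. -/
def esym (n k : ℕ) (x : Fin n → ℝ) : ℝ :=
  ∑ t ∈ Finset.univ.powersetCard k, ∏ i ∈ t, x i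

/-- σ_k(λ|i): the k-th elementary symmetric polynomial of `x` with the i-th entry removed. -/
def esymDel (n k : ℕ) (x : Fin n → ℝ) (i : Fin n) : ℝ :=
  ∑ t ∈ (Finset.univ.erase i).powersetCard k, ∏ j ∈ t, x j

namespace Multiset

variable {R : Type*} [CommSemiring R]

theorem esymm_zero (s : Multiset R) : s.esymm 0 = 1 := by
  simp [esymm]

theorem esymm_eq_zero_of_card_lt {s : Multiset R} {k : ℕ} (h : card s < k) : s.esymm k = 0 := by
  simp [esymm, powersetCard_eq_empty _ h]

theorem esymm_cons_succ (a : R) (s : Multiset R) (k : ℕ) :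
    (a ::ₘ s).esymm (k + 1) = s.esymm (k + 1) + a * s.esymm k := by
  simp [esymm, powersetCard_cons, ← sum_map_mul_left]

open Polynomial in
/-- `y` is the multiset of negated roots of the derivative of `∏ (X + xₘ)`. -/
theorem exists_esymm_derivative (x : Multiset ℝ) (n : ℕ) (hx : card x = n + 1) :
    ∃ y : Multiset ℝ, card y = n ∧ ∀ j, (n + 1) * y.esymm j = (n + 1 - j) * x.esymm j := by
  set Q : ℝ[X] := (x.map fun a => X + C a).prod
  have hQ : Q = ((x.map Neg.neg).map fun a => X - C a).prod := by
    simp [Q, Multiset.map_map]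
  have hQroots : card Q.roots = n + 1 := by
    rw [hQ, roots_multiset_prod_X_sub_C, card_map, hx]
  have hQdeg : Q.natDegree = n + 1 := by
    rw [hQ, natDegree_multiset_prod_X_sub_C_eq_card, card_map, hx]
  obtain ⟨hDroots, hDdeg⟩ : card (derivative Q).roots = n ∧ (derivative Q).natDegree = n := by
    have := natDegree_derivative_le Q
    have := card_roots_le_derivative Q
    have := card_roots' (derivative Q)
    omega
  have hDcoeff : ∀ j ≤ n, (derivative Q).coeff (n - j) = (n + 1 - j) * x.esymm j := by
    intro j hj
    rw [coeff_derivative, prod_X_add_C_coeff _ (by omega), hx,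
      show n + 1 - (n - j + 1) = j by omega, Nat.cast_sub hj]
    ring
  have hlead : (derivative Q).leadingCoeff = n + 1 := by
    rw [leadingCoeff, hDdeg, ← Nat.sub_zero n, hDcoeff 0 (Nat.zero_le n), esymm_zero]
    simp
  refine ⟨(derivative Q).roots.map Neg.neg, by rw [card_map, hDroots], fun j => ?_⟩
  rcases le_or_gt j n with hj | hj
  · have := coeff_eq_esymm_roots_of_card (hDroots.trans hDdeg.symm) (k := n - j) (by omega)
    rw [hDcoeff j hj, hlead, hDdeg, Nat.sub_sub_self hj] at this
    rw [esymm_neg, this]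
    ring
  · rw [esymm_eq_zero_of_card_lt (by simpa [hDroots] using hj)]
    rcases Nat.lt_or_ge (n + 1) j with hj' | hj'
    · rw [esymm_eq_zero_of_card_lt (by omega)]; ring
    · have : (j : ℝ) = n + 1 := by exact_mod_cast (by omega : j = n + 1)
      rw [this]; ring

theorem esymm_newton_top (s : Multiset ℝ) (i : ℕ) (hs : card s = i + 2) :
    2 * (i + 2) * (s.esymm i * s.esymm (i + 2)) ≤ (i + 1) * s.esymm (i + 1) ^ 2 := by
  induction i generalizing s with
  | zero =>
    obtain ⟨a, b, rfl⟩ := card_eq_two.mp hs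
    simp only [insert_eq_cons, zero_add, esymm_zero, esymm_pair_one, esymm_pair_two]
    push_cast
    nlinarith [sq_nonneg (a - b)]
  | succ i ih =>
    obtain ⟨a, t, rfl, ht⟩ := card_eq_succ_iff.mp hs
    rw [esymm_cons_succ, esymm_cons_succ, esymm_cons_succ,
      esymm_eq_zero_of_card_lt (by omega : card t < i + 1 + 2)]
    push_cast
    nlinarith [sq_nonneg ((i + 2) * t.esymm (i + 2) - a * t.esymm (i + 1)),
      mul_nonneg (sq_nonneg a) (sub_nonneg.2 (ih t ht))]

/-- Newton's inequality `Eᵢ₊₁² ≥ Eᵢ Eᵢ₊₂` for `Eⱼ = σⱼ / C(i + 2 + d, j)`, binomials cleared. -/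
theorem esymm_newton (s : Multiset ℝ) (i d : ℕ) (hs : card s = i + 2 + d) :
    (i + 2) * (d + 2) * (s.esymm i * s.esymm (i + 2)) ≤
      (i + 1) * (d + 1) * s.esymm (i + 1) ^ 2 := by
  induction d generalizing s with
  | zero => simpa [mul_comm (2 : ℝ)] using esymm_newton_top s i hs
  | succ d ih =>
    obtain ⟨y, hy, hys⟩ := exists_esymm_derivative s (i + 2 + d) hs
    set m : ℝ := (i + 2 + d : ℕ) + 1
    have hm : m = i + d + 3 := by simp only [m]; push_cast; ring
    have h0 : m * y.esymm i = (d + 3) * s.esymm i := by rw [hys, hm]; ring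
    have h1 : m * y.esymm (i + 1) = (d + 2) * s.esymm (i + 1) := by rw [hys, hm]; push_cast; ring
    have h2 : m * y.esymm (i + 2) = (d + 1) * s.esymm (i + 2) := by rw [hys, hm]; push_cast; ring
    have key : ((d : ℝ) + 1) * (d + 2) * ((i + 2) * (d + 3) * (s.esymm i * s.esymm (i + 2))) ≤
        ((d : ℝ) + 1) * (d + 2) * ((i + 1) * (d + 2) * s.esymm (i + 1) ^ 2) :=
      calc _ = (i + 2) * (d + 2) * ((m * y.esymm i) * (m * y.esymm (i + 2))) := by
              rw [h0, h2]; ring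
        _ = m ^ 2 * ((i + 2) * (d + 2) * (y.esymm i * y.esymm (i + 2))) := by ring
        _ ≤ m ^ 2 * ((i + 1) * (d + 1) * y.esymm (i + 1) ^ 2) :=
          mul_le_mul_of_nonneg_left (ih y hy) (sq_nonneg m)
        _ = (i + 1) * (d + 1) * (m * y.esymm (i + 1)) ^ 2 := by ring
        _ = _ := by rw [h1]; ring
    push_cast
    linarith [le_of_mul_le_mul_left key (by positivity)]

theorem esymm_mul_esymm_le_sq (s : Multiset ℝ) (i : ℕ) :
    s.esymm i * s.esymm (i + 2) ≤ s.esymm (i + 1) ^ 2 := by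
  rcases lt_or_ge (card s) (i + 2) with hs | hs
  · rw [esymm_eq_zero_of_card_lt hs, mul_zero]
    positivity
  · obtain ⟨d, hd⟩ := Nat.exists_eq_add_of_le hs
    have newton := esymm_newton s i d hd
    by_contra! hlt
    have hP : 0 < s.esymm i * s.esymm (i + 2) := (sq_nonneg _).trans_lt hlt
    have hc : ((i : ℝ) + 1) * (d + 1) ≤ (i + 2) * (d + 2) := by gcongr <;> norm_num
    nlinarith [mul_le_mul_of_nonneg_right hc hP.le,
      mul_lt_mul_of_pos_left hlt (by positivity : (0 : ℝ) < (i + 1) * (d + 1))]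

theorem esymm_succ_pos_of_cons {a : ℝ} {s : Multiset ℝ} {k : ℕ} (hs : 0 < s.esymm k)
    (h₁ : 0 < (a ::ₘ s).esymm (k + 1)) (h₂ : 0 < (a ::ₘ s).esymm (k + 2)) :
    0 < s.esymm (k + 1) := by
  rw [esymm_cons_succ] at h₁ h₂
  by_contra! hle
  have newton := esymm_mul_esymm_le_sq s k
  nlinarith [mul_lt_mul_of_pos_left (by linarith : -(a * s.esymm (k + 1)) < s.esymm (k + 2)) hs]

end Multiset

/-- The Gårding cone `Γₖ`; the condition at `m = 0` is vacuous since `σ₀ = 1`. -/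
def gardingCone (k : ℕ) : Set (Multiset ℝ) := {s | ∀ m ≤ k, 0 < s.esymm m}

theorem mem_gardingCone_of_cons_mem {a : ℝ} {s : Multiset ℝ} {k : ℕ}
    (h : a ::ₘ s ∈ gardingCone (k + 1)) : s ∈ gardingCone k := by
  induction k with
  | zero =>
    intro m hm
    rw [Nat.le_zero.mp hm, Multiset.esymm_zero]
    exact one_pos
  | succ k ih =>
    have hs : s ∈ gardingCone k := ih fun m hm => h m (by omega)
    intro m hm
    rcases Nat.lt_or_ge m (k + 1) with hm' | hm'
    · exact hs m (by omega)
    · rw [show m = k + 1 by omega]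
      exact Multiset.esymm_succ_pos_of_cons (hs k le_rfl) (h _ (by omega)) (h _ le_rfl)

theorem esymDel_pos_of_gardingCone_general (n k : ℕ) (hk : 1 ≤ k)
    (l : Fin n → ℝ)
    (hΓ : ∀ i : ℕ, 1 ≤ i → i ≤ k → 0 < esym n i l) :
    ∀ i : Fin n, 0 < esymDel n (k - 1) l i := by
  intro i
  have hsplit : Finset.univ.val.map l = l i ::ₘ (Finset.univ.erase i).val.map l := by
    rw [Finset.erase_val, ← Multiset.map_cons, Multiset.cons_erase (Finset.mem_univ i)]
  have hcone : l i ::ₘ (Finset.univ.erase i).val.map l ∈ gardingCone k := by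
    intro m hm
    rcases Nat.eq_zero_or_pos m with rfl | hm0
    · rw [Multiset.esymm_zero]; exact one_pos
    · rw [← hsplit, Finset.esymm_map_val]
      exact hΓ m hm0 hm
  obtain ⟨k, rfl⟩ := Nat.exists_eq_add_of_le' hk
  have := mem_gardingCone_of_cons_mem hcone k le_rfl
  rwa [Finset.esymm_map_val] at this

/-- For λ in the Gårding cone Γ_k, σ_{k-1}(λ|i) = ∂σ_k/∂λ_i > 0 for every index i. -/
theorem esymDel_pos_of_gardingCone (n k : ℕ) (hk : 1 ≤ k) (hkn : k ≤ n)
    (l : Fin n → ℝ)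
    (hΓ : ∀ i : ℕ, 1 ≤ i → i ≤ k → 0 < esym n i l) :
    ∀ i : Fin n, 0 < esymDel n (k - 1) l i :=
  esymDel_pos_of_gardingCone_general n k hk l hΓ
end

section
/- Newton–MacLaurin inequality: if λ ∈ Γ_m and m > l ≥ 0, r > s ≥ 0, m ≥ r, l ≥ s, then [ (σ_m(λ)/C(n,m)) / (σ_l(λ)/C(n,l)) ]^{1/(m-l)} ≤ [ (σ_r(λ)/C(n,r)) / (σ_s(λ)/C(n,s)) ]^{1/(r-s)}. -/
/-!
The normalized means `E_k = σ_k(λ) / C(n, k)` satisfy Newton's inequality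
`E_{k-1} E_{k+1} ≤ E_k²`, so on `Γ_m` the sequence `log E_k` is concave on `{0, …, m}`; after
taking logarithms the inequality says that the slope of a concave sequence over `[l, m]` is at most
its slope over `[s, r]`.

Newton's inequality holds for the normalized coefficients `a_k / C(N, k)` of every real-rooted
polynomial `∑ a_k X^k` of degree `N`. Differentiating keeps the polynomial real-rooted (Rolle) and
shifts the normalized coefficients down by one index; reversing keeps it real-rooted and mirrors
them. Together these reduce every instance to a quadratic with a real root, where the inequality
is the nonnegativity of the discriminant.
-/

open Finset

theorem Finset.card_nsmul_sum_le_card_nsmul_sum {ι M : Type*} [AddCommMonoid M] [PartialOrder M]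
    [IsOrderedAddMonoid M] {s t : Finset ι} {f : ι → M} {c : M}
    (hs : ∀ i ∈ s, c ≤ f i) (ht : ∀ i ∈ t, f i ≤ c) :
    #s • ∑ i ∈ t, f i ≤ #t • ∑ i ∈ s, f i :=
  calc #s • ∑ i ∈ t, f i ≤ #s • #t • c := nsmul_le_nsmul_right (sum_le_card_nsmul t f c ht) _
    _ = #t • #s • c := by rw [← mul_nsmul, ← mul_nsmul, mul_comm]
    _ ≤ #t • ∑ i ∈ s, f i := nsmul_le_nsmul_right (card_nsmul_le_sum s f c hs) _

section ConcaveSequence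

variable {a : ℕ → ℝ} {m : ℕ}

theorem succ_sub_antitone_of_concave (ha : ∀ k, k + 2 ≤ m → a k + a (k + 2) ≤ 2 * a (k + 1))
    {i j : ℕ} (hij : i ≤ j) (hjm : j < m) : a (j + 1) - a j ≤ a (i + 1) - a i := by
  induction j, hij using Nat.le_induction with
  | base => rfl
  | succ j hij ih => linarith [ha j (by omega), ih (by omega)]

theorem sub_mul_sub_le_of_concave (ha : ∀ k, k + 2 ≤ m → a k + a (k + 2) ≤ 2 * a (k + 1))
    {i j k : ℕ} (hij : i ≤ j) (hjk : j ≤ k) (hkm : k ≤ m) :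
    ((j : ℝ) - i) * (a k - a j) ≤ ((k : ℝ) - j) * (a j - a i) := by
  rcases hjk.eq_or_lt with rfl | hjk
  · simp
  have := card_nsmul_sum_le_card_nsmul_sum (s := Ico i j) (t := Ico j k)
    (f := fun t => a (t + 1) - a t) (c := a (j + 1) - a j)
    (fun t ht => succ_sub_antitone_of_concave ha (mem_Ico.1 ht).2.le (by omega))
    (fun u hu => succ_sub_antitone_of_concave ha (mem_Ico.1 hu).1 (by grind))
  rwa [sum_Ico_sub a hij, sum_Ico_sub a hjk.le, Nat.card_Ico, Nat.card_Ico, nsmul_eq_mul,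
    nsmul_eq_mul, Nat.cast_sub hij, Nat.cast_sub hjk.le] at this

theorem slope_le_slope_of_concave (ha : ∀ k, k + 2 ≤ m → a k + a (k + 2) ≤ 2 * a (k + 1))
    {l r s : ℕ} (hsl : s ≤ l) (hlm : l < m) (hsr : s < r) (hrm : r ≤ m) :
    (a m - a l) / ((m : ℝ) - l) ≤ (a r - a s) / ((r : ℝ) - s) := by
  have hsl' : (s : ℝ) ≤ l := by exact_mod_cast hsl
  have hlm' : (l : ℝ) < m := by exact_mod_cast hlm
  have hsr' : (s : ℝ) < r := by exact_mod_cast hsr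
  have hrm' : (r : ℝ) ≤ m := by exact_mod_cast hrm
  have h1 : ((m : ℝ) - s) * (a m - a l) ≤ ((m : ℝ) - l) * (a m - a s) := by
    linear_combination sub_mul_sub_le_of_concave ha hsl hlm.le le_rfl
  have h2 : ((r : ℝ) - s) * (a m - a s) ≤ ((m : ℝ) - s) * (a r - a s) := by
    linear_combination sub_mul_sub_le_of_concave ha hsr.le hrm le_rfl
  rw [div_le_div_iff₀ (by linarith) (by linarith)]
  refine le_of_mul_le_mul_left ?_ (by linarith : (0 : ℝ) < m - s)
  nlinarith [mul_le_mul_of_nonneg_left h1 (by linarith : (0 : ℝ) ≤ r - s),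
    mul_le_mul_of_nonneg_left h2 (by linarith : (0 : ℝ) ≤ m - l)]

theorem rpow_div_le_rpow_div_of_log_concave {u : ℕ → ℝ} (hpos : ∀ k ≤ m, 0 < u k)
    (hu : ∀ k, k + 2 ≤ m → u k * u (k + 2) ≤ u (k + 1) ^ 2)
    {l r s : ℕ} (hsl : s ≤ l) (hlm : l < m) (hsr : s < r) (hrm : r ≤ m) :
    (u m / u l) ^ (1 / ((m : ℝ) - l)) ≤ (u r / u s) ^ (1 / ((r : ℝ) - s)) := by
  have hlog : ∀ k, k + 2 ≤ m →
      Real.log (u k) + Real.log (u (k + 2)) ≤ 2 * Real.log (u (k + 1)) := fun k hk => by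
    rw [← Real.log_mul (hpos k (by omega)).ne' (hpos _ hk).ne',
      show 2 * Real.log (u (k + 1)) = Real.log (u (k + 1) ^ 2) by simp [Real.log_pow]]
    exact Real.log_le_log (mul_pos (hpos k (by omega)) (hpos _ hk)) (hu k hk)
  rw [Real.rpow_def_of_pos (div_pos (hpos m le_rfl) (hpos l hlm.le)),
    Real.rpow_def_of_pos (div_pos (hpos r hrm) (hpos s (by omega))),
    Real.log_div (hpos m le_rfl).ne' (hpos l hlm.le).ne',
    Real.log_div (hpos r hrm).ne' (hpos s (by omega)).ne', mul_one_div, mul_one_div]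
  exact Real.exp_le_exp.2
    (slope_le_slope_of_concave (a := fun k => Real.log (u k)) hlog hsl hlm hsr hrm)

end ConcaveSequence

namespace Polynomial

variable {K : Type*} [Field K]

noncomputable def normalizedCoeff (p : K[X]) (k : ℕ) : K :=
  p.coeff k / p.natDegree.choose k

theorem normalizedCoeff_derivative [CharZero K] (p : K[X]) (k : ℕ) :
    (derivative p).normalizedCoeff k = p.natDegree * p.normalizedCoeff (k + 1) := by
  obtain h0 | ⟨N, hN⟩ : p.natDegree = 0 ∨ ∃ N, p.natDegree = N + 1 :=
    (Nat.eq_zero_or_eq_succ_pred _).imp_right fun h => ⟨_, h⟩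
  · simp [normalizedCoeff, derivative_of_natDegree_zero h0, h0]
  simp only [normalizedCoeff, natDegree_derivative, coeff_derivative, hN, Nat.add_sub_cancel]
  rcases Nat.lt_or_ge N k with hlt | hle
  · simp [Nat.choose_eq_zero_of_lt hlt, Nat.choose_eq_zero_of_lt (Nat.succ_lt_succ hlt)]
  have hchoose : (N.choose k : K) * (N + 1) = ((N + 1).choose (k + 1) : K) * (k + 1) := by
    exact_mod_cast (mul_comm _ _).trans (Nat.add_one_mul_choose_eq N k)
  have h1 : (N.choose k : K) ≠ 0 := by exact_mod_cast (Nat.choose_pos hle).ne'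
  have h2 : ((N + 1).choose (k + 1) : K) ≠ 0 := by
    exact_mod_cast (Nat.choose_pos (Nat.succ_le_succ hle)).ne'
  rw [mul_div_assoc', div_eq_div_iff h1 h2]
  push_cast
  linear_combination -p.coeff (k + 1) * hchoose

theorem natDegree_reverse_of_coeff_zero_ne_zero {p : K[X]} (h0 : p.coeff 0 ≠ 0) :
    p.reverse.natDegree = p.natDegree := by
  rw [reverse_natDegree, natTrailingDegree_eq_zero.2 (Or.inr h0), Nat.sub_zero]

theorem normalizedCoeff_reverse {p : K[X]} (h0 : p.coeff 0 ≠ 0) {k : ℕ} (hk : k ≤ p.natDegree) :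
    p.reverse.normalizedCoeff k = p.normalizedCoeff (p.natDegree - k) := by
  rw [normalizedCoeff, normalizedCoeff, natDegree_reverse_of_coeff_zero_ne_zero h0, coeff_reverse,
    revAt_le hk, Nat.choose_symm hk]

theorem Splits.reverse {p : K[X]} (hp : p.Splits) : p.reverse.Splits := by
  have h1 : (1 : K[X]).reverse = 1 := by simpa using reverse_C (1 : K)
  induction hp using Submonoid.closure_induction with
  | mem q hq =>
    obtain ⟨a, rfl⟩ | ⟨a, rfl⟩ := hq
    · rw [reverse_C]; exact Splits.C a
    · have hX : (X : K[X]).reverse = 1 := by simpa [h1] using reverse_X_mul (1 : K[X])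
      rw [reverse_add_C, hX, natDegree_X, pow_one]
      rcases eq_or_ne a 0 with rfl | ha
      · simp
      · have : 1 + C a * X = C a * (X + C a⁻¹) := by
          rw [mul_add, ← C_mul, mul_inv_cancel₀ ha, C_1, add_comm]
        rw [this]
        exact (Splits.X_add_C _).C_mul a
  | one => rw [h1]; exact Splits.one
  | mul f g _ _ hf hg => rw [reverse_mul_of_domain]; exact hf.mul hg

theorem Splits.derivative {p : ℝ[X]} (hp : p.Splits) : p.derivative.Splits := by
  rw [splits_iff_card_roots] at hp ⊢
  have := card_roots_le_derivative p
  have := card_roots' p.derivative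
  rw [natDegree_derivative] at *
  omega

section Ordered

variable [LinearOrder K] [IsStrictOrderedRing K]

theorem Splits.normalizedCoeff_mul_le_sq_of_natDegree_eq_two {p : K[X]} (hp : p.Splits)
    (h2 : p.natDegree = 2) :
    p.normalizedCoeff 0 * p.normalizedCoeff 2 ≤ p.normalizedCoeff 1 ^ 2 := by
  have hp0 : p ≠ 0 := by rintro rfl; simp at h2
  obtain ⟨x, hx⟩ := hp.exists_eval_eq_zero (by rw [degree_eq_natDegree hp0, h2]; decide)
  rw [eval_eq_sum_range, h2] at hx
  simp only [Finset.sum_range_succ, Finset.sum_range_zero] at hx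
  have hdisc : 0 ≤ discrim (p.coeff 2) (p.coeff 1) (p.coeff 0) := by
    rw [discrim_eq_sq_of_quadratic_eq_zero (x := x) (by linear_combination hx)]
    positivity
  rw [discrim] at hdisc
  simp only [normalizedCoeff, h2, Nat.choose_zero_right, Nat.choose_self, Nat.choose_one_right,
    Nat.cast_one, Nat.cast_ofNat, div_one]
  linarith

theorem normalizedCoeff_mul_le_sq_of_derivative {p : K[X]} (hp : p.natDegree ≠ 0) {k : ℕ}
    (h : p.derivative.normalizedCoeff k * p.derivative.normalizedCoeff (k + 2) ≤
      p.derivative.normalizedCoeff (k + 1) ^ 2) :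
    p.normalizedCoeff (k + 1) * p.normalizedCoeff (k + 3) ≤ p.normalizedCoeff (k + 2) ^ 2 := by
  simp only [normalizedCoeff_derivative] at h
  have : (0 : K) < (p.natDegree : K) ^ 2 := by positivity
  nlinarith

end Ordered

theorem Splits.normalizedCoeff_mul_le_sq {p : ℝ[X]} (hp : p.Splits) {k : ℕ}
    (hk : k + 2 ≤ p.natDegree) :
    p.normalizedCoeff k * p.normalizedCoeff (k + 2) ≤ p.normalizedCoeff (k + 1) ^ 2 := by
  induction hN : p.natDegree using Nat.strong_induction_on generalizing p k with
  | _ N ih =>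
  have shifted : ∀ {q : ℝ[X]} {j : ℕ}, q.Splits → q.natDegree = N → j + 3 ≤ N →
      q.normalizedCoeff (j + 1) * q.normalizedCoeff (j + 3) ≤ q.normalizedCoeff (j + 2) ^ 2 :=
    fun hq hqN hj => normalizedCoeff_mul_le_sq_of_derivative (by omega)
      (ih (N - 1) (by omega) hq.derivative (by rw [natDegree_derivative, hqN]; omega)
        (by rw [natDegree_derivative, hqN]))
  cases k with
  | succ j => exact shifted hp hN (by omega)
  | zero =>
    by_cases h0 : p.coeff 0 = 0
    · rw [normalizedCoeff, h0, zero_div, zero_mul]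
      positivity
    obtain h2 | h3 : N = 2 ∨ 3 ≤ N := by omega
    · exact hp.normalizedCoeff_mul_le_sq_of_natDegree_eq_two (hN.trans h2)
    have hrev : ∀ i ≤ N, p.reverse.normalizedCoeff i = p.normalizedCoeff (N - i) := by
      intro i hi
      rw [normalizedCoeff_reverse h0 (hN ▸ hi), hN]
    have := shifted hp.reverse (by rw [natDegree_reverse_of_coeff_zero_ne_zero h0, hN])
      (j := N - 3) (by omega)
    rwa [hrev _ (by omega), hrev _ (by omega), hrev _ (by omega),
      show N - (N - 3 + 1) = 2 by omega, show N - (N - 3 + 3) = 0 by omega,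
      show N - (N - 3 + 2) = 1 by omega, mul_comm] at this

end Polynomial

open Polynomial

theorem esym_eq_coeff_prod_X_add_C {n k : ℕ} (lam : Fin n → ℝ) (hk : k ≤ n) :
    esym n k lam = (∏ i, (X + C (lam i))).coeff (n - k) := by
  rw [Finset.prod_X_add_C_coeff _ _ (by simp), Finset.card_univ, Fintype.card_fin,
    Nat.sub_sub_self hk, esym]

theorem esym_div_choose_mul_le_sq {n k : ℕ} (lam : Fin n → ℝ) (hk : k + 2 ≤ n) :
    esym n k lam / n.choose k * (esym n (k + 2) lam / n.choose (k + 2)) ≤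
      (esym n (k + 1) lam / n.choose (k + 1)) ^ 2 := by
  set p : ℝ[X] := ∏ i, (X + C (lam i))
  have hdeg : p.natDegree = n := by
    rw [natDegree_prod_of_monic _ _ fun i _ => monic_X_add_C _]
    simp
  have hcoeff : ∀ j ≤ n, p.normalizedCoeff (n - j) = esym n j lam / n.choose j := fun j hj => by
    rw [normalizedCoeff, hdeg, esym_eq_coeff_prod_X_add_C lam hj, Nat.choose_symm hj]
  have := (Splits.prod fun i _ => Splits.X_add_C (lam i)).normalizedCoeff_mul_le_sq
    (p := p) (k := n - (k + 2)) (by omega)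
  rwa [hcoeff _ (by omega), show n - (k + 2) + 2 = n - k by omega, hcoeff _ (by omega),
    show n - (k + 2) + 1 = n - (k + 1) by omega, hcoeff _ (by omega), mul_comm] at this

/-- Generalized Newton–MacLaurin inequality. -/
theorem newton_maclaurin (n m l r s : ℕ) (hmn : m ≤ n)
    (hlm : l < m) (hsr : s < r) (hrm : r ≤ m) (hsl : s ≤ l)
    (lam : Fin n → ℝ)
    (hΓ : ∀ i : ℕ, 1 ≤ i → i ≤ m → 0 < esym n i lam) :
    ((esym n m lam / (n.choose m : ℝ)) / (esym n l lam / (n.choose l : ℝ)))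
        ^ ((1 : ℝ) / ((m : ℝ) - (l : ℝ)))
      ≤ ((esym n r lam / (n.choose r : ℝ)) / (esym n s lam / (n.choose s : ℝ)))
        ^ ((1 : ℝ) / ((r : ℝ) - (s : ℝ))) := by
  have hpos : ∀ j ≤ m, 0 < esym n j lam / n.choose j := fun j hj => by
    refine div_pos ?_ (by exact_mod_cast Nat.choose_pos (hj.trans hmn))
    rcases Nat.eq_zero_or_pos j with rfl | hj0
    · simp [esym]
    · exact hΓ j hj0 hj
  exact rpow_div_le_rpow_div_of_log_concave (u := fun j => esym n j lam / n.choose j) hpos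
    (fun k hk => esym_div_choose_mul_le_sq lam (hk.trans hmn)) hsl hlm hsr hrm
end

section
/- Quotient ratio bound used in Step 3 of the C² estimate: if λ₁ ≥ λ₂ ≥ ⋯ ≥ λₙ ≥ 0 and λ_{l+1} ≤ δ'·λ₁ for some δ' > 0, then the deleted term satisfies σ_l(λ|1)/σ_l(λ) ≤ C·λ_{l+1}/λ₁ for a constant C = C(n,l), provided λ₁⋯λ_l > 0; consequently λ₁·σ_l^{11}/σ_l = 1 − σ_l(λ|1)/σ_l(λ) ≥ 1 − C·δ'. -/
/-!
Indices start at `0`, so `λ₁` is `x 0`. Every `l`-subset of `{2, …, n}` has product at most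
`λ₂⋯λ_{l+1}`, hence `σ_l(λ|1) ≤ C(n-1, l) λ₂⋯λ_{l+1}`, while `σ_l(λ) ≥ λ₁⋯λ_l`. Since
`λ₁ · λ₂⋯λ_{l+1} = λ_{l+1} · λ₁⋯λ_l`, this gives the ratio bound. The second claim follows from
`σ_l(λ) = λ₁ σ_{l-1}(λ|1) + σ_l(λ|1)` and `λ_{l+1} ≤ δ' λ₁`.
-/

open Finset

lemma Fin.val_le_val_of_strictMono {k n : ℕ} {f : Fin k → Fin n} (hf : StrictMono f)
    (j : Fin k) : (j : ℕ) ≤ f j := by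
  obtain ⟨j, hj⟩ := j
  induction j with
  | zero => exact Nat.zero_le _
  | succ j ih => exact (ih (by omega)).trans_lt (hf (Fin.mk_lt_mk.2 j.lt_succ_self))

theorem prod_filter_val_lt_eq_prod_castLE {n k : ℕ} (x : Fin n → ℝ) (hk : k ≤ n) :
    ∏ i ∈ univ.filter (fun i : Fin n => (i : ℕ) < k), x i =
      ∏ j : Fin k, x (Fin.castLE hk j) := by
  trans ∏ i ∈ univ.map (Fin.castLEEmb hk), x i
  · congr 1
    ext i
    simp only [mem_filter, mem_univ, true_and, mem_map, Fin.castLEEmb_apply]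
    exact ⟨fun h => ⟨⟨i, h⟩, rfl⟩, by rintro ⟨j, rfl⟩; exact j.isLt⟩
  · rw [prod_map]
    rfl

theorem mul_prod_castLE_succ_eq {m k : ℕ} (x : Fin (m + 1) → ℝ) (hk : k ≤ m) :
    x 0 * ∏ j : Fin k, x (Fin.castLE hk j).succ =
      x ⟨k, by omega⟩ * ∏ j : Fin k, x (Fin.castLE (hk.trans m.le_succ) j) := by
  have h := Fin.prod_univ_succ fun j : Fin (k + 1) => x (Fin.castLE (Nat.succ_le_succ hk) j)
  rw [Fin.prod_univ_castSucc, mul_comm] at h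
  exact h.symm

theorem esym_succ_eq_mul_esymDel_add {n : ℕ} (k : ℕ) (x : Fin n → ℝ) (i : Fin n) :
    esym n (k + 1) x = x i * esymDel n k x i + esymDel n (k + 1) x i := by
  have hi : i ∉ univ.erase i := notMem_erase i _
  have hnot : ∀ t ∈ (univ.erase i).powersetCard k, i ∉ t := fun t ht hit =>
    hi ((mem_powersetCard.1 ht).1 hit)
  rw [esym, ← insert_erase (mem_univ i), powersetCard_succ_insert hi, sum_union, sum_image,
    add_comm, esymDel, esymDel, mul_sum]
  · congr 1
    exact sum_congr rfl fun t ht => prod_insert (hnot t ht)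
  · intro a ha b hb hab
    rw [← erase_insert (hnot a ha), ← erase_insert (hnot b hb)]
    exact congrArg (·.erase i) hab
  · refine disjoint_left.2 fun t ht htim => ?_
    obtain ⟨u, -, rfl⟩ := mem_image.1 htim
    exact hi ((mem_powersetCard.1 ht).1 (mem_insert_self i u))

theorem mul_esymDel_div_esym_eq_one_sub {n : ℕ} (k : ℕ) (x : Fin n → ℝ) (i : Fin n)
    (hσ : esym n (k + 1) x ≠ 0) :
    x i * esymDel n k x i / esym n (k + 1) x = 1 - esymDel n (k + 1) x i / esym n (k + 1) x := by
  rw [eq_sub_iff_add_eq, ← add_div, ← esym_succ_eq_mul_esymDel_add, div_self hσ]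

theorem esymDel_zero_eq_esym_comp_succ {m : ℕ} (k : ℕ) (x : Fin (m + 1) → ℝ) :
    esymDel (m + 1) k x 0 = esym m k (x ∘ Fin.succ) := by
  have hsucc : univ.erase (0 : Fin (m + 1)) = univ.map (Fin.succEmb m) := by
    rw [map_eq_image, Fin.coe_succEmb, Fin.image_succ_univ, compl_singleton]
  rw [esymDel, hsucc, powersetCard_map, sum_map, esym]
  exact sum_congr rfl fun t _ => prod_map _ _ _

section Antitone

variable {n : ℕ} {x : Fin n → ℝ}

theorem prod_castLE_le_esym (hx : ∀ i, 0 ≤ x i) {k : ℕ} (hk : k ≤ n) :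
    ∏ j : Fin k, x (Fin.castLE hk j) ≤ esym n k x := by
  have hmem : univ.map (Fin.castLEEmb hk) ∈ (univ : Finset (Fin n)).powersetCard k := by
    simp
  simpa [esym, prod_map] using single_le_sum (f := fun t => ∏ i ∈ t, x i)
    (fun t _ => prod_nonneg fun i _ => hx i) hmem

theorem prod_le_prod_castLE_of_antitone (hx : ∀ i, 0 ≤ x i) (hanti : Antitone x)
    {t : Finset (Fin n)} {k : ℕ} (ht : #t = k) (hk : k ≤ n) :
    ∏ i ∈ t, x i ≤ ∏ j : Fin k, x (Fin.castLE hk j) := by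
  -- the `j`-th smallest element of `t` sits at position at least `j`
  rw [← t.map_orderEmbOfFin_univ ht, prod_map]
  exact prod_le_prod (fun _ _ => hx _) fun j _ =>
    hanti (Fin.le_def.2 (Fin.val_le_val_of_strictMono (t.orderEmbOfFin ht).strictMono j))

theorem esym_le_choose_mul_prod_castLE (hx : ∀ i, 0 ≤ x i) (hanti : Antitone x)
    {k : ℕ} (hk : k ≤ n) :
    esym n k x ≤ n.choose k * ∏ j : Fin k, x (Fin.castLE hk j) := by
  calc esym n k x
      ≤ #((univ : Finset (Fin n)).powersetCard k) • ∏ j : Fin k, x (Fin.castLE hk j) :=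
        sum_le_card_nsmul _ _ _ fun t ht =>
          prod_le_prod_castLE_of_antitone hx hanti (mem_powersetCard.1 ht).2 hk
    _ = n.choose k * ∏ j : Fin k, x (Fin.castLE hk j) := by simp

end Antitone

theorem esymDel_zero_div_esym_le {m k : ℕ} {x : Fin (m + 1) → ℝ} (hx : ∀ i, 0 ≤ x i)
    (hanti : Antitone x) (hk : k ≤ m) (hx0 : 0 < x 0) (hσ : 0 < esym (m + 1) k x) :
    esymDel (m + 1) k x 0 / esym (m + 1) k x ≤ m.choose k * x ⟨k, by omega⟩ / x 0 := by
  rw [div_le_div_iff₀ hσ hx0, esymDel_zero_eq_esym_comp_succ]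
  calc esym m k (x ∘ Fin.succ) * x 0
      ≤ m.choose k * (x 0 * ∏ j : Fin k, x (Fin.castLE hk j).succ) := by
        rw [mul_comm, mul_left_comm]
        gcongr
        exact esym_le_choose_mul_prod_castLE (fun j => hx j.succ)
          (hanti.comp_monotone Fin.strictMono_succ.monotone) hk
    _ = m.choose k * x ⟨k, by omega⟩ * ∏ j : Fin k, x (Fin.castLE (hk.trans m.le_succ) j) := by
        rw [mul_prod_castLE_succ_eq, mul_assoc]
    _ ≤ m.choose k * x ⟨k, by omega⟩ * esym (m + 1) k x := by
        gcongr
        · exact mul_nonneg (Nat.cast_nonneg _) (hx _)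
        · exact prod_castLE_le_esym hx _

theorem deleted_ratio_bound_general (n l : ℕ) (hl : 0 < l) (hln : l < n)
    (δ' : ℝ) (lam : Fin n → ℝ)
    (hnn : ∀ i, 0 ≤ lam i)
    (hmono : ∀ i j : Fin n, i ≤ j → lam j ≤ lam i)
    (hprod : 0 < ∏ i ∈ Finset.univ.filter (fun i : Fin n => (i : ℕ) < l), lam i)
    (hgap : lam ⟨l, hln⟩ ≤ δ' * lam ⟨0, Nat.lt_of_lt_of_le hl hln.le⟩) :
    esymDel n l lam ⟨0, Nat.lt_of_lt_of_le hl hln.le⟩ / esym n l lam ≤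
        ((n - 1).choose l : ℝ) * lam ⟨l, hln⟩ / lam ⟨0, Nat.lt_of_lt_of_le hl hln.le⟩ ∧
    1 - ((n - 1).choose l : ℝ) * δ' ≤
      lam ⟨0, Nat.lt_of_lt_of_le hl hln.le⟩ *
        esymDel n (l - 1) lam ⟨0, Nat.lt_of_lt_of_le hl hln.le⟩ / esym n l lam := by
  obtain ⟨m, rfl⟩ : ∃ m, n = m + 1 := ⟨n - 1, by omega⟩
  obtain ⟨k, rfl⟩ : ∃ k, l = k + 1 := ⟨l - 1, by omega⟩
  simp only [Fin.zero_eta, add_tsub_cancel_right] at hgap ⊢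
  rw [prod_filter_val_lt_eq_prod_castLE lam hln.le] at hprod
  have hσ : 0 < esym (m + 1) (k + 1) lam := hprod.trans_le (prod_castLE_le_esym hnn hln.le)
  have hx0 : 0 < lam 0 :=
    (hnn 0).lt_of_ne fun h => hprod.ne' (prod_eq_zero (i := 0) (mem_univ _) h.symm)
  have hratio := esymDel_zero_div_esym_le hnn hmono (Nat.le_of_lt_succ hln) hx0 hσ
  refine ⟨hratio, ?_⟩
  have hδ : (m.choose (k + 1) : ℝ) * lam ⟨k + 1, hln⟩ / lam 0 ≤ m.choose (k + 1) * δ' := by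
    rw [div_le_iff₀ hx0, mul_assoc]
    gcongr
  rw [mul_esymDel_div_esym_eq_one_sub k lam 0 hσ.ne']
  linarith

/-- Quotient ratio bound: if λ₁ ≥ ⋯ ≥ λₙ ≥ 0, λ₁⋯λ_l > 0 and λ_{l+1} ≤ δ'·λ₁, then
σ_l(λ|1)/σ_l(λ) ≤ C·λ_{l+1}/λ₁ with C = C(n,l), and consequently
λ₁·σ_{l-1}(λ|1)/σ_l(λ) = 1 − σ_l(λ|1)/σ_l(λ) ≥ 1 − C·δ'. -/
theorem deleted_ratio_bound (n l : ℕ) (hl : 0 < l) (hln : l < n)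
    (δ' : ℝ) (hδ' : 0 < δ') (lam : Fin n → ℝ)
    (hnn : ∀ i, 0 ≤ lam i)
    (hmono : ∀ i j : Fin n, i ≤ j → lam j ≤ lam i)
    (hprod : 0 < ∏ i ∈ Finset.univ.filter (fun i : Fin n => (i : ℕ) < l), lam i)
    (hgap : lam ⟨l, hln⟩ ≤ δ' * lam ⟨0, Nat.lt_of_lt_of_le hl hln.le⟩) :
    esymDel n l lam ⟨0, Nat.lt_of_lt_of_le hl hln.le⟩ / esym n l lam ≤
        ((n - 1).choose l : ℝ) * lam ⟨l, hln⟩ / lam ⟨0, Nat.lt_of_lt_of_le hl hln.le⟩ ∧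
    1 - ((n - 1).choose l : ℝ) * δ' ≤
      lam ⟨0, Nat.lt_of_lt_of_le hl hln.le⟩ *
        esymDel n (l - 1) lam ⟨0, Nat.lt_of_lt_of_le hl hln.le⟩ / esym n l lam :=
  deleted_ratio_bound_general n l hl hln δ' lam hnn hmono hprod hgap
end
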